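/- arXiv:1501.06220 — 4 statements merged into one kernel-verified Lean document; each statement's English description precedes it below -/
import Mathlib

section
/- If f(x) = x + f₁x²/2! + f₂x³/3! + ... is a formal power series with q(x) = 1/f(x) satisfying the functional equation q(x)q(x+y) + q(−x)q(y) + q(−x−y)q(−y) = C (as a formal identity in two variables), then 2C = 3f₁² − f₂. -/
/-!
Clearing denominators turns the functional equation into an identity between products of the
series `f(s x + t y)` in `ℚ⟦x, y⟧`. Identifying both variables sends `f(s x + t y)` to
`f((s + t) x)`, so the identity survives on the diagonal `y = x`. There, writing `f = x g` with
`g(0) = 1`, each product of four factors `f(r x)` is `x⁴` times a series whose `x²`-coefficient is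
`f₂/6 · Σ r² + (f₁/2)² · Σ r r'`, while the product of six factors is `-4 x⁶ + O(x⁷)`. Comparing
the coefficients of `x⁶` gives `4C = 24 (f₁/2)² - 12 (f₂/6)`.
-/

noncomputable def sub2 (f : PowerSeries ℚ) (s t : ℚ) : MvPowerSeries (Fin 2) ℚ :=
  fun d => (PowerSeries.coeff (R := ℚ) (d 0 + d 1) f) * ((d 0 + d 1).choose (d 0)) * s ^ (d 0) * t ^ (d 1)

/-- `1 / f(s·x + t·y)` as an element of the field of fractions of `ℚ⟦x, y⟧`. -/
noncomputable def qv (f : PowerSeries ℚ) (s t : ℚ) : FractionRing (MvPowerSeries (Fin 2) ℚ) :=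
  (algebraMap (MvPowerSeries (Fin 2) ℚ) (FractionRing (MvPowerSeries (Fin 2) ℚ)) (sub2 f s t))⁻¹

/-- The two-variable functional equation
`q(x)q(x+y) + q(-x)q(y) + q(-x-y)q(-y) = C` for `q = 1/f`. -/
def TwoVarEq (f : PowerSeries ℚ) (C : ℚ) : Prop :=
  qv f 1 0 * qv f 1 1 + qv f (-1) 0 * qv f 0 1 + qv f (-1) (-1) * qv f 0 (-1)
    = (C : FractionRing (MvPowerSeries (Fin 2) ℚ))

open PowerSeries

section Diagonal

variable {R : Type*} [CommRing R]

theorem constantCoeff_rescale (a : R) (p : R⟦X⟧) :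
    constantCoeff (rescale a p) = constantCoeff p := by
  rw [← coeff_zero_eq_constantCoeff_apply, coeff_rescale, pow_zero, one_mul,
    coeff_zero_eq_constantCoeff_apply]

theorem coeff_two_mul (p q : R⟦X⟧) :
    coeff 2 (p * q) =
      constantCoeff p * coeff 2 q + coeff 1 p * coeff 1 q + coeff 2 p * constantCoeff q := by
  simp only [coeff_mul, Finset.Nat.sum_antidiagonal_succ, Finset.Nat.antidiagonal_zero,
    Finset.sum_singleton, coeff_zero_eq_constantCoeff_apply]
  ring

theorem coeff_two_rescale_mul (g : R⟦X⟧) (hg : constantCoeff g = 1) (a b c d : R) :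
    coeff 2 (rescale a g * rescale b g * (rescale c g * rescale d g)) =
      coeff 2 g * (a ^ 2 + b ^ 2 + c ^ 2 + d ^ 2) +
        coeff 1 g ^ 2 * (a * b + a * c + a * d + b * c + b * d + c * d) := by
  simp only [coeff_two_mul, coeff_one_mul, map_mul, constantCoeff_rescale, coeff_rescale, hg]
  ring

theorem coeff_six_rescale_X_mul_four (g : R⟦X⟧) (hg : constantCoeff g = 1) (a b c d : R) :
    coeff 6 (rescale a (X * g) * rescale b (X * g) * (rescale c (X * g) * rescale d (X * g))) =
      a * b * c * d * (coeff 2 g * (a ^ 2 + b ^ 2 + c ^ 2 + d ^ 2) +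
        coeff 1 g ^ 2 * (a * b + a * c + a * d + b * c + b * d + c * d)) := by
  have factor : rescale a (X * g) * rescale b (X * g) * (rescale c (X * g) * rescale d (X * g)) =
      C (a * b * c * d) * (X ^ 4 * (rescale a g * rescale b g * (rescale c g * rescale d g))) := by
    simp only [map_mul, rescale_X]
    ring
  rw [factor, coeff_C_mul, coeff_X_pow_mul', if_pos (by norm_num), coeff_two_rescale_mul g hg]

theorem coeff_six_rescale_X_mul_six (g : R⟦X⟧) (hg : constantCoeff g = 1) (a b c d e k : R) :
    coeff 6 (rescale a (X * g) * rescale b (X * g) * (rescale c (X * g) * rescale d (X * g) *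
      (rescale e (X * g) * rescale k (X * g)))) = a * b * c * d * e * k := by
  have factor : rescale a (X * g) * rescale b (X * g) * (rescale c (X * g) * rescale d (X * g) *
      (rescale e (X * g) * rescale k (X * g))) =
      C (a * b * c * d * e * k) * (X ^ 6 * (rescale a g * rescale b g * (rescale c g * rescale d g *
        (rescale e g * rescale k g)))) := by
    simp only [map_mul, rescale_X]
    ring
  rw [factor, coeff_C_mul, coeff_X_pow_mul', if_pos le_rfl, Nat.sub_self,
    coeff_zero_eq_constantCoeff_apply]
  simp only [map_mul, constantCoeff_rescale, hg, mul_one]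

/-- The functional equation on the diagonal `y = x`, with denominators cleared;
`rescale r f` is `f(r x)`. -/
def DiagonalEq (f : R⟦X⟧) (c : R) : Prop :=
  rescale (-1) f * rescale 1 f * (rescale (-2) f * rescale (-1) f) +
      rescale 1 f * rescale 2 f * (rescale (-2) f * rescale (-1) f) +
      rescale 1 f * rescale 2 f * (rescale (-1) f * rescale 1 f) =
    c • (rescale 1 f * rescale 2 f * (rescale (-1) f * rescale 1 f *
      (rescale (-2) f * rescale (-1) f)))

theorem DiagonalEq.four_mul_eq {f : R⟦X⟧} {c : R} (h0 : constantCoeff f = 0)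
    (h1 : coeff 1 f = 1) (h : DiagonalEq f c) :
    4 * c = 12 * (2 * coeff 2 f ^ 2 - coeff 3 f) := by
  obtain ⟨g, rfl⟩ := X_dvd_iff.mpr h0
  have hg : constantCoeff g = 1 := by rwa [← coeff_zero_eq_constantCoeff_apply, ← coeff_succ_X_mul]
  have h6 := congrArg (coeff 6) h
  rw [map_add, map_add, coeff_smul, coeff_six_rescale_X_mul_four g hg,
    coeff_six_rescale_X_mul_four g hg, coeff_six_rescale_X_mul_four g hg,
    coeff_six_rescale_X_mul_six g hg, smul_eq_mul] at h6
  rw [coeff_succ_X_mul, coeff_succ_X_mul]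
  linear_combination h6

end Diagonal

theorem rename_sub2 (f : ℚ⟦X⟧) (s t : ℚ) :
    MvPowerSeries.rename (fun _ : Fin 2 => ()) (sub2 f s t) = rescale (s + t) f := by
  have mem_iff (d : Fin 2 →₀ ℕ) (n : ℕ) :
      Finsupp.mapDomain (fun _ => ()) d = Finsupp.single () n ↔ d 0 + d 1 = n := by
    rw [Finsupp.unique_ext_iff]
    simp [Finsupp.mapDomain, Finsupp.sum_fintype]
  ext n
  conv_lhs => rw [coeff_def (s := Finsupp.single () n) (by simp), MvPowerSeries.coeff_rename]
  rw [coeff_rescale, (Commute.all s t).add_pow', Finset.sum_mul]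
  refine Finset.sum_nbij' (fun d => (d 0, d 1))
    (fun p => Finsupp.single 0 p.1 + Finsupp.single 1 p.2) ?_ ?_ ?_ ?_ ?_
  · intro d hd
    simpa [mem_iff] using hd
  · intro p hp
    simpa [mem_iff] using hp
  · intro d _
    ext i
    fin_cases i <;> simp
  · intro p _
    simp
  · intro d hd
    obtain rfl : d 0 + d 1 = n := by simpa [mem_iff] using hd
    rw [MvPowerSeries.coeff_apply, nsmul_eq_mul]
    simp only [sub2]
    ring

theorem sub2_ne_zero {f : ℚ⟦X⟧} (h1 : coeff 1 f = 1) {s t : ℚ} (hst : s + t ≠ 0) :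
    sub2 f s t ≠ 0 := by
  intro h
  have := congrArg (coeff 1) (rename_sub2 f s t)
  rw [h, map_zero, coeff_rescale, h1] at this
  simp [eq_comm, hst] at this

theorem TwoVarEq.cleared {f : ℚ⟦X⟧} {C : ℚ} (h1 : coeff 1 f = 1) (heq : TwoVarEq f C) :
    sub2 f (-1) 0 * sub2 f 0 1 * (sub2 f (-1) (-1) * sub2 f 0 (-1)) +
        sub2 f 1 0 * sub2 f 1 1 * (sub2 f (-1) (-1) * sub2 f 0 (-1)) +
        sub2 f 1 0 * sub2 f 1 1 * (sub2 f (-1) 0 * sub2 f 0 1) =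
      C • (sub2 f 1 0 * sub2 f 1 1 * (sub2 f (-1) 0 * sub2 f 0 1 *
        (sub2 f (-1) (-1) * sub2 f 0 (-1)))) := by
  have hne (s t : ℚ) (hst : s + t ≠ 0) :
      algebraMap _ (FractionRing (MvPowerSeries (Fin 2) ℚ)) (sub2 f s t) ≠ 0 :=
    (map_ne_zero_iff _ (IsFractionRing.injective _ _)).mpr (sub2_ne_zero h1 hst)
  apply IsFractionRing.injective _ (FractionRing (MvPowerSeries (Fin 2) ℚ))
  unfold TwoVarEq qv at heq
  simp only [map_add, map_mul, Algebra.smul_def]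
  rw [← IsScalarTower.algebraMap_apply, eq_ratCast, ← heq]
  field_simp [hne 1 0 (by norm_num), hne 1 1 (by norm_num), hne (-1) 0 (by norm_num),
    hne 0 1 (by norm_num), hne (-1) (-1) (by norm_num), hne 0 (-1) (by norm_num)]

theorem TwoVarEq.diagonalEq {f : ℚ⟦X⟧} {C : ℚ} (h1 : coeff 1 f = 1) (heq : TwoVarEq f C) :
    DiagonalEq f C := by
  have h := congrArg (MvPowerSeries.rename fun _ : Fin 2 => ()) (heq.cleared h1)
  simp only [map_add, map_mul, map_smul, rename_sub2, add_zero, zero_add, one_add_one_eq_two,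
    show (-1 : ℚ) + -1 = -2 by norm_num] at h
  exact h

/-- If `q = 1/f` satisfies the two-variable functional equation with constant `C`,
then `2C = 3f₁² − f₂`. -/
theorem stmt_2 (f : PowerSeries ℚ) (C : ℚ) (fc : ℕ → ℚ)
    (h0 : PowerSeries.constantCoeff (R := ℚ) f = 0) (h1 : PowerSeries.coeff (R := ℚ) 1 f = 1)
    (hfc : ∀ k, 1 ≤ k → PowerSeries.coeff (R := ℚ) (k + 1) f = fc k / ((k + 1).factorial : ℚ))
    (heq : TwoVarEq f C) :
    2 * C = 3 * (fc 1) ^ 2 - fc 2 := by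
  have h := (heq.diagonalEq h1).four_mul_eq h0 h1
  rw [hfc 1 le_rfl, hfc 2 one_le_two] at h
  norm_num [Nat.factorial] at h
  linear_combination h / 2
end

section
/- Given f₁, f₂, f₃ ∈ R, there is at most one formal power series f(x) = x + Σ_{k≥1} fₖ x^{k+1}/(k+1)! (i.e. all later coefficients f₄, f₅, ... are uniquely determined) such that q = 1/f satisfies q(x)² − f₁ q(−x) + q'(−x) = C for some constant C. -/
/-!
Write `f = x u` with `u(0) = 1`, so that `q = x⁻¹ a` with `a = u⁻¹`. For `n ≥ 2` the coefficient
of `xⁿ` in the equation is free of `C` and reads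
`(2 + (−1)ⁿ (n+1)) a_{n+2} = (polynomial in f₁, a₀, …, a_{n+1})`, and the factor never vanishes.
So `a`, hence `f`, is determined by `a₀, …, a₃`, i.e. by the coefficients of `f` up to `x⁴`.
-/

/-- Substitution `x ↦ -x` in a Laurent series. -/
noncomputable def negSub (q : LaurentSeries ℚ) : LaurentSeries ℚ :=
  { coeff := fun n => (-1 : ℚ) ^ n * q.coeff n,
    isPWO_support' := q.isPWO_support'.mono (by
      intro n hn
      simp only [Function.mem_support] at hn ⊢
      intro h
      exact hn (by rw [h, mul_zero])) }

/-- `q = 1/f` as a Laurent series. -/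
noncomputable def lq (f : PowerSeries ℚ) : LaurentSeries ℚ :=
  (HahnSeries.ofPowerSeries ℤ ℚ f)⁻¹

/-- Derivative of Laurent series. -/
noncomputable def lD : LaurentSeries ℚ → LaurentSeries ℚ := LaurentSeries.derivative ℚ

/-- The one-variable functional-differential equation
`q(x)² − f₁ q(−x) + q'(−x) = C` for `q = 1/f`. -/
def OneVarEq (f : PowerSeries ℚ) (f1 C : ℚ) : Prop :=
  (lq f) ^ 2 - f1 • negSub (lq f) + negSub (lD (lq f)) = C • (1 : LaurentSeries ℚ)

open PowerSeries

namespace PowerSeries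

variable {R : Type*} [CommRing R]

theorem coeff_sq_sub_sq_of_X_pow_dvd {a b : R⟦X⟧} {m : ℕ} (h : X ^ m ∣ a - b) :
    coeff m (a ^ 2) - coeff m (b ^ 2) =
      coeff m (a - b) * (constantCoeff a + constantCoeff b) := by
  obtain ⟨d, hd⟩ := h
  have hsq : a ^ 2 - b ^ 2 = X ^ m * (d * (a + b)) := by
    rw [← mul_assoc, ← hd]; ring
  simp [← map_sub, hsq, hd, coeff_X_pow_mul']

theorem X_pow_succ_dvd_of_coeff_eq_zero {φ : R⟦X⟧} {m : ℕ} (h : X ^ m ∣ φ)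
    (hm : coeff m φ = 0) : X ^ (m + 1) ∣ φ := by
  rw [X_pow_dvd_iff] at h ⊢
  intro i hi
  rcases Nat.lt_succ_iff_lt_or_eq.mp hi with hi | rfl
  exacts [h i hi, hm]

theorem eq_of_forall_X_pow_dvd_sub {a b : R⟦X⟧} {N : ℕ} (h : ∀ m ≥ N, X ^ m ∣ a - b) :
    a = b := by
  refine sub_eq_zero.mp (ext fun n => ?_)
  exact X_pow_dvd_iff.mp (h (max N (n + 1)) (le_max_left _ _)) n
    (Nat.lt_of_lt_of_le n.lt_succ_self (le_max_right _ _))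

variable {k : Type*} [Field k]

theorem X_pow_dvd_inv_sub_inv {u v : k⟦X⟧} {m : ℕ} (hu : constantCoeff u ≠ 0)
    (hv : constantCoeff v ≠ 0) (h : X ^ m ∣ u - v) : X ^ m ∣ u⁻¹ - v⁻¹ := by
  have : u⁻¹ - v⁻¹ = -(u - v) * u⁻¹ * v⁻¹ := by
    linear_combination v⁻¹ * PowerSeries.mul_inv_cancel u hu -
      u⁻¹ * PowerSeries.mul_inv_cancel v hv
  rw [this]
  exact ((dvd_neg.mpr h).mul_right _).mul_right _

theorem eq_of_inv_eq_inv {u v : k⟦X⟧} (hu : constantCoeff u ≠ 0) (hv : constantCoeff v ≠ 0)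
    (h : u⁻¹ = v⁻¹) : u = v := by
  calc u = u * (v⁻¹ * v) := by rw [PowerSeries.inv_mul_cancel v hv, mul_one]
    _ = u * u⁻¹ * v := by rw [← h, mul_assoc]
    _ = v := by rw [PowerSeries.mul_inv_cancel u hu, one_mul]

end PowerSeries

theorem HahnSeries.coeff_single_neg_mul_ofPowerSeries {R : Type*} [Semiring R] (k n : ℕ)
    (a : R⟦X⟧) :
    (single (-(k : ℤ)) (1 : R) * ofPowerSeries ℤ R a).coeff (n : ℤ) =
      PowerSeries.coeff (n + k) a := by
  have : (n : ℤ) = ((n + k : ℕ) : ℤ) + -(k : ℤ) := by push_cast; ring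
  rw [this, coeff_single_mul_add, ofPowerSeries_apply_coeff, one_mul]

theorem lq_X_mul {u : ℚ⟦X⟧} (hu : constantCoeff u ≠ 0) :
    lq (X * u) = HahnSeries.single (-1 : ℤ) (1 : ℚ) * HahnSeries.ofPowerSeries ℤ ℚ u⁻¹ := by
  refine inv_eq_of_mul_eq_one_right ?_
  calc HahnSeries.ofPowerSeries ℤ ℚ (X * u) *
        (HahnSeries.single (-1) 1 * HahnSeries.ofPowerSeries ℤ ℚ u⁻¹)
      = (HahnSeries.single 1 1 * HahnSeries.single (-1) 1) *
          HahnSeries.ofPowerSeries ℤ ℚ (u * u⁻¹) := by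
        rw [map_mul, map_mul, HahnSeries.ofPowerSeries_X]; ring
    _ = 1 := by rw [HahnSeries.single_mul_single, PowerSeries.mul_inv_cancel u hu]; simp

theorem lD_coeff (q : LaurentSeries ℚ) (n : ℤ) : (lD q).coeff n = (n + 1) * q.coeff (n + 1) := by
  rw [lD, LaurentSeries.derivative_apply, LaurentSeries.hasseDeriv_coeff, Nat.cast_one,
    Ring.choose_one_right, zsmul_eq_mul]
  push_cast
  rfl

theorem negSub_coeff (q : LaurentSeries ℚ) (n : ℤ) : (negSub q).coeff n = (-1) ^ n * q.coeff n :=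
  rfl

/-- The coefficient of `xⁿ` in `q(x)² − f₁ q(−x) + q'(−x)` for `q = x⁻¹ a`. -/
noncomputable def oneVarResidual {R : Type*} [CommRing R] (f1 : R) (a : R⟦X⟧) (n : ℕ) : R :=
  coeff (n + 2) (a ^ 2) - f1 * (-1) ^ n * coeff (n + 1) a + (-1) ^ n * (n + 1) * coeff (n + 2) a

theorem OneVarEq.oneVarResidual_eq_zero {u : ℚ⟦X⟧} {f1 C : ℚ} (hu : constantCoeff u ≠ 0)
    (h : OneVarEq (X * u) f1 C) {n : ℕ} (hn : n ≠ 0) : oneVarResidual f1 u⁻¹ n = 0 := by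
  have hq : ∀ m : ℕ, (lq (X * u)).coeff m = coeff (m + 1) u⁻¹ := fun m => by
    simpa [lq_X_mul hu] using HahnSeries.coeff_single_neg_mul_ofPowerSeries 1 m u⁻¹
  have hq2 : ((lq (X * u)) ^ 2).coeff n = coeff (n + 2) (u⁻¹ ^ 2) := by
    have : lq (X * u) ^ 2 =
        HahnSeries.single (-(2 : ℕ) : ℤ) (1 : ℚ) * HahnSeries.ofPowerSeries ℤ ℚ (u⁻¹ ^ 2) := by
      rw [lq_X_mul hu, mul_pow, map_pow, HahnSeries.single_pow]; norm_num
    rw [this, HahnSeries.coeff_single_neg_mul_ofPowerSeries]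
  have hn' := congrArg (fun q : LaurentSeries ℚ => q.coeff (n : ℤ)) h
  simp only [HahnSeries.coeff_add, HahnSeries.coeff_sub, HahnSeries.coeff_smul,
    HahnSeries.coeff_one, negSub_coeff, lD_coeff, hq2, zpow_natCast, smul_eq_mul,
    Nat.cast_eq_zero, hn, if_false, mul_zero] at hn'
  rw [hq, show (n : ℤ) + 1 = ((n + 1 : ℕ) : ℤ) by push_cast; ring, hq] at hn'
  rw [oneVarResidual, ← hn']
  push_cast
  ring

theorem two_add_neg_one_pow_mul_ne_zero {R : Type*} [Ring R] [CharZero R] {n : ℕ} (hn : 2 ≤ n) :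
    (2 : R) + (-1) ^ n * (n + 1) ≠ 0 := by
  rcases n.even_or_odd with he | ho
  · rw [he.neg_one_pow, one_mul]
    exact_mod_cast (by omega : 2 + (n + 1) ≠ 0)
  · rw [ho.neg_one_pow, neg_one_mul, ← sub_eq_add_neg, sub_ne_zero]
    exact_mod_cast (by omega : 2 ≠ n + 1)

section Recursion

variable {R : Type*} [CommRing R] [IsDomain R] [CharZero R]

theorem coeff_sub_eq_zero_of_oneVarResidual_eq_zero {f1 : R} {a b : R⟦X⟧} {n : ℕ} (hn : 2 ≤ n)
    (ha0 : constantCoeff a = 1) (hb0 : constantCoeff b = 1)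
    (ha : oneVarResidual f1 a n = 0) (hb : oneVarResidual f1 b n = 0)
    (h : X ^ (n + 2) ∣ a - b) : coeff (n + 2) (a - b) = 0 := by
  have hsq := coeff_sq_sub_sq_of_X_pow_dvd h
  have hprev : coeff (n + 1) (a - b) = 0 := X_pow_dvd_iff.mp h _ (by omega)
  rw [ha0, hb0] at hsq
  rw [map_sub] at hsq hprev ⊢
  have : (2 + (-1) ^ n * (n + 1)) * (coeff (n + 2) a - coeff (n + 2) b) = 0 := by
    rw [oneVarResidual] at ha hb
    linear_combination ha - hb - hsq + f1 * (-1) ^ n * hprev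
  exact (mul_eq_zero.mp this).resolve_left (two_add_neg_one_pow_mul_ne_zero hn)

theorem eq_of_oneVarResidual_eq_zero {f1 : R} {a b : R⟦X⟧}
    (ha0 : constantCoeff a = 1) (hb0 : constantCoeff b = 1)
    (ha : ∀ n ≠ 0, oneVarResidual f1 a n = 0) (hb : ∀ n ≠ 0, oneVarResidual f1 b n = 0)
    (h4 : X ^ 4 ∣ a - b) : a = b := by
  refine eq_of_forall_X_pow_dvd_sub (N := 4) fun m hm => ?_
  induction m, hm using Nat.le_induction with
  | base => exact h4
  | succ m hm ih =>
    obtain ⟨n, rfl⟩ : ∃ n, m = n + 2 := ⟨m - 2, by omega⟩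
    refine X_pow_succ_dvd_of_coeff_eq_zero ih ?_
    exact coeff_sub_eq_zero_of_oneVarResidual_eq_zero (by omega) ha0 hb0
      (ha n (by omega)) (hb n (by omega)) ih

end Recursion

/-- Uniqueness: a power series `f(x) = x + Σ fₖ x^{k+1}/(k+1)!` such that `q = 1/f`
satisfies `q(x)² − f₁ q(−x) + q'(−x) = C` for some constant `C` is uniquely determined
by `f₁, f₂, f₃` (i.e. by its coefficients of `x², x³, x⁴`). -/
theorem stmt_8 (f g : PowerSeries ℚ) (Cf Cg : ℚ)
    (h0f : PowerSeries.constantCoeff f = 0) (h1f : PowerSeries.coeff 1 f = 1)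
    (h0g : PowerSeries.constantCoeff g = 0) (h1g : PowerSeries.coeff 1 g = 1)
    (h2 : PowerSeries.coeff 2 f = PowerSeries.coeff 2 g)
    (h3 : PowerSeries.coeff 3 f = PowerSeries.coeff 3 g)
    (h4 : PowerSeries.coeff 4 f = PowerSeries.coeff 4 g)
    (hf : OneVarEq f (2 * PowerSeries.coeff 2 f) Cf)
    (hg : OneVarEq g (2 * PowerSeries.coeff 2 g) Cg) :
    f = g := by
  obtain ⟨u, rfl⟩ := X_dvd_iff.mpr h0f
  obtain ⟨v, rfl⟩ := X_dvd_iff.mpr h0g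
  rw [h2] at hf
  simp only [coeff_succ_X_mul, coeff_zero_eq_constantCoeff_apply] at h1f h1g h2 h3 h4
  have hu : constantCoeff u ≠ 0 := by simp [h1f]
  have hv : constantCoeff v ≠ 0 := by simp [h1g]
  have huv : X ^ 4 ∣ u - v := X_pow_dvd_iff.mpr fun i hi => by
    interval_cases i <;> simp [h1f, h1g, h2, h3, h4]
  have hinv : u⁻¹ = v⁻¹ :=
    eq_of_oneVarResidual_eq_zero (by simp [h1f]) (by simp [h1g])
      (fun _ hn => hf.oneVarResidual_eq_zero hu hn) (fun _ hn => hg.oneVarResidual_eq_zero hv hn)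
      (X_pow_dvd_inv_sub_inv hu hv huv)
  rw [eq_of_inv_eq_inv hu hv hinv]
end

section
/- Let f(x) = −(2℘(x) + a²/2)/(℘'(x) − a℘(x) + b − a³/4) where ℘ has invariants g₂ = −(1/4)(8b−3a³)a, g₃ = (1/24)(8b²−12a³b+3a⁶). Then f has Taylor expansion f(x) = x + f₁x²/2! + f₂x³/3! + f₃x⁴/4! + ... at 0 with f₁ = −a, f₂ = 3a², f₃ = 12b − 9a³. -/
/-!
Multiplying numerator and denominator by `z³` writes the quotient as `-N/D` with `N`, `D`
analytic at `0` and `D 0 = -2`. A polynomial identity `-N = T·D + z⁵ S` with the quartic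
`T z = z - a z²/2 + a² z³/2 + (b/2 - 3a³/8) z⁴` then shows `-N/D = T + z⁵ (S/D)` near `0`,
so the iterated derivatives of order `< 5` at `0` are those of `T`.
-/

open Filter Topology

section

variable {𝕜 : Type*} [NontriviallyNormedField 𝕜]

theorem iteratedDeriv_pow_mul_zero_of_lt {H : 𝕜 → 𝕜} {k n : ℕ} (hH : ContDiffAt 𝕜 k H 0)
    (hk : k < n) : iteratedDeriv k (fun z => z ^ n * H z) 0 = 0 := by
  rw [iteratedDeriv_fun_mul (by fun_prop) hH]
  refine Finset.sum_eq_zero fun i hi => ?_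
  have hin : i ≠ n := by rw [Finset.mem_range] at hi; omega
  rw [iteratedDeriv_fun_pow_zero, if_neg hin, Nat.cast_zero, mul_zero, zero_mul]

theorem iteratedDeriv_sum_monomial_zero (c : ℕ → 𝕜) {k n : ℕ} (hk : k < n) :
    iteratedDeriv k (fun z => ∑ i ∈ Finset.range n, c i * z ^ i) 0 = k.factorial * c k := by
  rw [iteratedDeriv_fun_sum fun i _ => by fun_prop]
  simp only [iteratedDeriv_const_mul_field, iteratedDeriv_fun_pow_zero]
  simp [Finset.mem_range.2 hk, mul_comm]

theorem iteratedDeriv_zero_of_eventuallyEq_sum_add_pow_mul (c : ℕ → 𝕜) {F H : 𝕜 → 𝕜}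
    {k n : ℕ} (hH : ContDiffAt 𝕜 k H 0) (hk : k < n)
    (hF : F =ᶠ[𝓝 0] fun z => ∑ i ∈ Finset.range n, c i * z ^ i + z ^ n * H z) :
    iteratedDeriv k F 0 = k.factorial * c k := by
  rw [hF.iteratedDeriv_eq, iteratedDeriv_fun_add (by fun_prop) (by fun_prop),
    iteratedDeriv_pow_mul_zero_of_lt hH hk, iteratedDeriv_sum_monomial_zero c hk, add_zero]

theorem eventually_deriv_eq_of_eventually_eq_inv_sq_add {P V : 𝕜 → 𝕜}
    (hV : ∀ᶠ z in 𝓝 0, DifferentiableAt 𝕜 V z)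
    (hP : ∀ᶠ z in 𝓝[≠] 0, P z = 1 / z ^ 2 + z ^ 2 * V z) :
    ∀ᶠ z in 𝓝[≠] 0, deriv P z = -2 / z ^ 3 + 2 * z * V z + z ^ 2 * deriv V z := by
  filter_upwards [eventually_nhdsNE_eventually_nhds_iff.2 hP, self_mem_nhdsWithin,
    hV.filter_mono nhdsWithin_le_nhds] with z hPz hz hVz
  have hz : z ≠ 0 := hz
  have h : HasDerivAt (fun w => 1 / w ^ 2 + w ^ 2 * V w)
      (-2 / z ^ 3 + 2 * z * V z + z ^ 2 * deriv V z) z := by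
    simp only [one_div]
    refine (((hasDerivAt_pow 2 z).inv (pow_ne_zero 2 hz)).add
      ((hasDerivAt_pow 2 z).mul hVz.hasDerivAt)).congr_deriv ?_
    field_simp
    ring
  exact (h.congr_of_eventuallyEq hPz).deriv

end

noncomputable section

variable (a b : ℂ) (V : ℂ → ℂ)

/-- `z³ (2℘ z + a²/2)` for `℘ z = 1/z² + z² V z`. -/
def clearedNum (z : ℂ) : ℂ := 2 * z + a ^ 2 / 2 * z ^ 3 + 2 * z ^ 5 * V z

/-- `z³ (℘' z - a ℘ z + b - a³/4)` for `℘ z = 1/z² + z² V z`. -/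
def clearedDen (z : ℂ) : ℂ :=
  -2 - a * z + (b - a ^ 3 / 4) * z ^ 3 + 2 * z ^ 4 * V z + z ^ 5 * deriv V z - a * z ^ 5 * V z

def taylorCoeff : ℕ → ℂ
  | 1 => 1
  | 2 => -a / 2
  | 3 => a ^ 2 / 2
  | 4 => b / 2 - 3 * a ^ 3 / 8
  | _ => 0

variable {V}

theorem clearedDen_zero : clearedDen a b V 0 = -2 := by
  simp [clearedDen]

theorem analyticAt_clearedDen (hV : AnalyticAt ℂ V 0) : AnalyticAt ℂ (clearedDen a b V) 0 := by
  unfold clearedDen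
  fun_prop

theorem analyticAt_clearedQuotient (hV : AnalyticAt ℂ V 0) :
    AnalyticAt ℂ (fun z => -clearedNum a V z / clearedDen a b V z) 0 := by
  refine AnalyticAt.div (by unfold clearedNum; fun_prop) (analyticAt_clearedDen a b hV) ?_
  rw [clearedDen_zero]
  norm_num

theorem eventuallyEq_taylorCoeff_add_pow_mul (hV : AnalyticAt ℂ V 0) :
    ∃ H : ℂ → ℂ, AnalyticAt ℂ H 0 ∧
      (fun z => -clearedNum a V z / clearedDen a b V z) =ᶠ[𝓝 0]
        fun z => ∑ i ∈ Finset.range 5, taylorCoeff a b i * z ^ i + z ^ 5 * H z := by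
  set c := b / 2 - 3 * a ^ 3 / 8
  set d := b - a ^ 3 / 4
  set S : ℂ → ℂ := fun z => a * c + a * d / 2 - a ^ 2 * d / 2 * z - c * d * z ^ 2
    - (2 * V z + (2 * V z + z * deriv V z - a * z * V z)
      * (1 - a / 2 * z + a ^ 2 / 2 * z ^ 2 + c * z ^ 3))
  have hNum : ∀ z, -clearedNum a V z
      = (∑ i ∈ Finset.range 5, taylorCoeff a b i * z ^ i) * clearedDen a b V z + z ^ 5 * S z := by
    intro z
    simp only [clearedNum, clearedDen, S, c, d, Finset.sum_range_succ, Finset.sum_range_zero,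
      taylorCoeff]
    ring
  have hD0 : clearedDen a b V 0 ≠ 0 := by rw [clearedDen_zero]; norm_num
  refine ⟨fun z => S z / clearedDen a b V z, ?_, ?_⟩
  · exact AnalyticAt.div (by fun_prop) (analyticAt_clearedDen a b hV) hD0
  · filter_upwards [(analyticAt_clearedDen a b hV).continuousAt.eventually_ne hD0] with z hz
    rw [hNum]
    field_simp

theorem eventually_div_eq_clearedNum_div_clearedDen {P : ℂ → ℂ} (hV : AnalyticAt ℂ V 0)
    (hP : ∀ᶠ z in 𝓝[≠] 0, P z = 1 / z ^ 2 + z ^ 2 * V z) :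
    ∀ᶠ z in 𝓝[≠] 0, -(2 * P z + a ^ 2 / 2) / (deriv P z - a * P z + b - a ^ 3 / 4)
      = -clearedNum a V z / clearedDen a b V z := by
  have hV' : ∀ᶠ z in 𝓝 0, DifferentiableAt ℂ V z :=
    hV.eventually_analyticAt.mono fun z hz => hz.differentiableAt
  filter_upwards [hP, eventually_deriv_eq_of_eventually_eq_inv_sq_add hV' hP,
    self_mem_nhdsWithin] with z hPz hP'z hz
  have hz : z ≠ 0 := hz
  have hN : 2 * P z + a ^ 2 / 2 = clearedNum a V z / z ^ 3 := by
    rw [hPz, clearedNum]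
    field_simp
    ring
  have hD : deriv P z - a * P z + b - a ^ 3 / 4 = clearedDen a b V z / z ^ 3 := by
    rw [hP'z, hPz, clearedDen]
    field_simp
    ring
  rw [hN, hD, ← neg_div, div_div_div_cancel_right₀ (pow_ne_zero 3 hz)]

end

theorem stmt_14_general (a b : ℂ) (P E : ℂ → ℂ)
    (g2 g3 : ℂ)
    (hE : ∀ᶠ z in 𝓝 (0 : ℂ), AnalyticAt ℂ E z)
    (hP : ∀ᶠ z in 𝓝[≠] (0 : ℂ),
      P z = 1 / z ^ 2 + g2 / 20 * z ^ 2 + g3 / 28 * z ^ 4 + z ^ 6 * E z) :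
    ∃ F : ℂ → ℂ, AnalyticAt ℂ F 0 ∧
      (∀ᶠ z in 𝓝[≠] (0 : ℂ),
        F z = -(2 * P z + a ^ 2 / 2) / (deriv P z - a * P z + b - a ^ 3 / 4)) ∧
      F 0 = 0 ∧
      deriv F 0 = 1 ∧
      iteratedDeriv 2 F 0 = -a ∧
      iteratedDeriv 3 F 0 = 3 * a ^ 2 ∧
      iteratedDeriv 4 F 0 = 12 * b - 9 * a ^ 3 := by
  set V : ℂ → ℂ := fun z => g2 / 20 + g3 / 28 * z ^ 2 + z ^ 4 * E z
  have hV : AnalyticAt ℂ V 0 := by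
    have := hE.self_of_nhds
    fun_prop
  have hPV : ∀ᶠ z in 𝓝[≠] 0, P z = 1 / z ^ 2 + z ^ 2 * V z :=
    hP.mono fun z hz => by rw [hz]; ring
  obtain ⟨H, hH, hF⟩ := eventuallyEq_taylorCoeff_add_pow_mul a b hV
  have taylor (k : ℕ) (hk : k < 5) := iteratedDeriv_zero_of_eventuallyEq_sum_add_pow_mul _
    hH.contDiffAt hk hF
  refine ⟨_, analyticAt_clearedQuotient a b hV,
    (eventually_div_eq_clearedNum_div_clearedDen a b hV hPV).mono fun z hz => hz.symm,
    by simp [clearedNum], ?_, ?_, ?_, ?_⟩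
  · rw [← iteratedDeriv_one, taylor 1 (by norm_num)]
    simp [taylorCoeff]
  · rw [taylor 2 (by norm_num)]
    norm_num [taylorCoeff, Nat.factorial]
    ring
  · rw [taylor 3 (by norm_num)]
    norm_num [taylorCoeff, Nat.factorial]
    ring
  · rw [taylor 4 (by norm_num)]
    norm_num [taylorCoeff, Nat.factorial]
    ring

/-- Let `f(x) = −(2℘(x) + a²/2)/(℘'(x) − a℘(x) + b − a³/4)` where `℘` has the Laurent
expansion `℘(x) = 1/x² + g₂x²/20 + g₃x⁴/28 + O(x⁶)` at `0`, with
`g₂ = −(1/4)(8b − 3a³)a` and `g₃ = (1/24)(8b² − 12a³b + 3a⁶)`. Then `f` extends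
analytically to `0` with `f(0) = 0`, `f'(0) = 1`, and Taylor coefficients
`f₁ = −a`, `f₂ = 3a²`, `f₃ = 12b − 9a³` in `f(x) = x + Σ fₖ x^{k+1}/(k+1)!`. -/
theorem stmt_14 (a b : ℂ) (P E : ℂ → ℂ)
    (g2 g3 : ℂ)
    (hg2 : g2 = -(1 / 4) * (8 * b - 3 * a ^ 3) * a)
    (hg3 : g3 = (1 / 24) * (8 * b ^ 2 - 12 * a ^ 3 * b + 3 * a ^ 6))
    (hE : ∀ᶠ z in 𝓝 (0 : ℂ), AnalyticAt ℂ E z)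
    (hP : ∀ᶠ z in 𝓝[≠] (0 : ℂ),
      P z = 1 / z ^ 2 + g2 / 20 * z ^ 2 + g3 / 28 * z ^ 4 + z ^ 6 * E z) :
    ∃ F : ℂ → ℂ, AnalyticAt ℂ F 0 ∧
      (∀ᶠ z in 𝓝[≠] (0 : ℂ),
        F z = -(2 * P z + a ^ 2 / 2) / (deriv P z - a * P z + b - a ^ 3 / 4)) ∧
      F 0 = 0 ∧
      deriv F 0 = 1 ∧
      iteratedDeriv 2 F 0 = -a ∧
      iteratedDeriv 3 F 0 = 3 * a ^ 2 ∧
      iteratedDeriv 4 F 0 = 12 * b - 9 * a ^ 3 :=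
  stmt_14_general a b P E g2 g3 hE hP
end

section
/- For any α, β and the series f(x) = (e^{αx} − e^{βx})/(α e^{αx} − β e^{βx}) = x + Σ fₖ x^{k+1}/(k+1)!, the coefficient relation f₄ = 15f₁⁴ − 25f₁²f₂ + 7f₁f₃ + 4f₂² holds. -/
/-- `f(x) = (e^{αx} − e^{βx})/(α e^{αx} − β e^{βx})` as a formal power series. -/
noncomputable def fTodd (α β : ℂ) : PowerSeries ℂ :=
  (PowerSeries.rescale α (PowerSeries.exp ℂ) - PowerSeries.rescale β (PowerSeries.exp ℂ)) *
    (PowerSeries.C α * PowerSeries.rescale α (PowerSeries.exp ℂ) -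
      PowerSeries.C β * PowerSeries.rescale β (PowerSeries.exp ℂ))⁻¹

/-- The coefficient `fₖ` in the expansion `f(x) = x + Σ fₖ x^{k+1}/(k+1)!`. -/
noncomputable def fk (α β : ℂ) (k : ℕ) : ℂ :=
  ((k + 1).factorial : ℂ) * PowerSeries.coeff (k + 1) (fTodd α β)

/-!
Multiplying `f` by its denominator `D = α e^{αx} − β e^{βx}` gives `e^{αx} − e^{βx}`. The constant
term of `D` is `α − β ≠ 0`, so comparing coefficients of `x^n` determines the coefficients of `f`
one after another. This yields `f₁ = −(α + β)`, `f₂ = α² + 4αβ + β²`,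
`f₃ = −(α³ + 11α²β + 11αβ² + β³)` and `f₄ = α⁴ + 26α³β + 66α²β² + 26αβ³ + β⁴` (Eulerian
polynomials), for which the claimed relation is a polynomial identity.
-/

open PowerSeries Finset

namespace Todd

section Field

variable {K : Type*} [Field K] [CharZero K]

theorem coeff_rescale_exp (γ : K) (n : ℕ) :
    coeff n (rescale γ (exp K)) = γ ^ n / n.factorial := by
  simp only [coeff_rescale, coeff_exp, map_div₀, map_one, map_natCast]
  ring

noncomputable def denom (α β : K) : K⟦X⟧ :=
  C α * rescale α (exp K) - C β * rescale β (exp K)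

theorem coeff_denom (α β : K) (n : ℕ) :
    coeff n (denom α β) = (α ^ (n + 1) - β ^ (n + 1)) / n.factorial := by
  simp only [denom, map_sub, coeff_C_mul, coeff_rescale_exp]
  ring

theorem constantCoeff_denom (α β : K) : constantCoeff (denom α β) = α - β := by
  rw [← coeff_zero_eq_constantCoeff_apply, coeff_denom]
  simp

end Field

variable {α β : ℂ}

theorem fTodd_mul_denom (h : α ≠ β) :
    fTodd α β * denom α β = rescale α (exp ℂ) - rescale β (exp ℂ) := by
  have hD : constantCoeff (denom α β) ≠ 0 := by
    rw [constantCoeff_denom]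
    exact sub_ne_zero.mpr h
  rw [fTodd, ← denom, mul_assoc, PowerSeries.inv_mul_cancel _ hD, mul_one]

theorem sub_mul_coeff_fTodd (h : α ≠ β) (n : ℕ) :
    (α - β) * coeff n (fTodd α β) = (α ^ n - β ^ n) / n.factorial -
      ∑ k ∈ range n,
        coeff k (fTodd α β) * ((α ^ (n - k + 1) - β ^ (n - k + 1)) / (n - k).factorial) := by
  have hn := congrArg (coeff n) (fTodd_mul_denom h)
  rw [coeff_mul, Nat.sum_antidiagonal_eq_sum_range_succ_mk, sum_range_succ, map_sub,
    coeff_rescale_exp, coeff_rescale_exp] at hn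
  simp only [coeff_denom, Nat.sub_self, Nat.factorial_zero] at hn
  rw [sub_div, ← hn]
  ring

theorem coeff_zero_fTodd (h : α ≠ β) : coeff 0 (fTodd α β) = 0 := by
  simpa [sub_ne_zero.mpr h] using sub_mul_coeff_fTodd h 0

theorem coeff_one_fTodd (h : α ≠ β) : coeff 1 (fTodd α β) = 1 := by
  rw [← mul_right_inj' (sub_ne_zero.mpr h), sub_mul_coeff_fTodd h]
  simp [coeff_zero_fTodd h]

theorem coeff_two_fTodd (h : α ≠ β) : coeff 2 (fTodd α β) = -(α + β) / 2 := by
  rw [← mul_right_inj' (sub_ne_zero.mpr h), sub_mul_coeff_fTodd h]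
  simp only [sum_range_succ, sum_range_zero, coeff_zero_fTodd h, coeff_one_fTodd h]
  norm_num [Nat.factorial]
  ring

theorem coeff_three_fTodd (h : α ≠ β) :
    coeff 3 (fTodd α β) = (α ^ 2 + 4 * α * β + β ^ 2) / 6 := by
  rw [← mul_right_inj' (sub_ne_zero.mpr h), sub_mul_coeff_fTodd h]
  simp only [sum_range_succ, sum_range_zero, coeff_zero_fTodd h, coeff_one_fTodd h, coeff_two_fTodd h]
  norm_num [Nat.factorial]
  ring

theorem coeff_four_fTodd (h : α ≠ β) :
    coeff 4 (fTodd α β) = -(α ^ 3 + 11 * α ^ 2 * β + 11 * α * β ^ 2 + β ^ 3) / 24 := by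
  rw [← mul_right_inj' (sub_ne_zero.mpr h), sub_mul_coeff_fTodd h]
  simp only [sum_range_succ, sum_range_zero, coeff_zero_fTodd h, coeff_one_fTodd h, coeff_two_fTodd h,
    coeff_three_fTodd h]
  norm_num [Nat.factorial]
  ring

theorem coeff_five_fTodd (h : α ≠ β) :
    coeff 5 (fTodd α β) =
      (α ^ 4 + 26 * α ^ 3 * β + 66 * α ^ 2 * β ^ 2 + 26 * α * β ^ 3 + β ^ 4) / 120 := by
  rw [← mul_right_inj' (sub_ne_zero.mpr h), sub_mul_coeff_fTodd h]
  simp only [sum_range_succ, sum_range_zero, coeff_zero_fTodd h, coeff_one_fTodd h, coeff_two_fTodd h,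
    coeff_three_fTodd h, coeff_four_fTodd h]
  norm_num [Nat.factorial]
  ring

end Todd

/-- The Todd series satisfies `f₄ = 15f₁⁴ − 25f₁²f₂ + 7f₁f₃ + 4f₂²`. -/
theorem stmt_19 (α β : ℂ) (hαβ : α ≠ β) :
    fk α β 4 = 15 * (fk α β 1) ^ 4 - 25 * (fk α β 1) ^ 2 * fk α β 2
      + 7 * fk α β 1 * fk α β 3 + 4 * (fk α β 2) ^ 2 := by
  simp only [fk, Todd.coeff_two_fTodd hαβ, Todd.coeff_three_fTodd hαβ, Todd.coeff_four_fTodd hαβ,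
    Todd.coeff_five_fTodd hαβ]
  norm_num [Nat.factorial]
  ring
end
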